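/- Let Θ be an inner function and φ ∈ L²(𝕋). If the truncated Toeplitz operator A_φ^Θ is bounded on K_Θ, then A_{z^j φ}^Θ is bounded for every integer j. -/

import Mathlib

open MeasureTheory Complex Submodule
open scoped ENNReal
open scoped ComplexConjugate

noncomputable section

instance : Fact (0 < 2 * Real.pi) := ⟨by positivity⟩

abbrev 𝕋m := AddCircle (2 * Real.pi)
abbrev μT : Measure 𝕋m := AddCircle.haarAddCircle
abbrev L2 : Type := Lp ℂ 2 μT

open scoped Classical in
/-- Embedding of a.e.-defined functions into `L²`, with junk value `0` when not in `L²`. -/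
def toL2 (g : 𝕋m → ℂ) : L2 := if h : MemLp g 2 μT then h.toLp g else 0

/-- The coordinate function `z^j` on the circle. -/
def zc (j : ℤ) : 𝕋m → ℂ := fun x => fourier j x

/-- Pointwise product in `L²` (junk value if the product is not square integrable). -/
def mulL2 (f g : L2) : L2 := toL2 (fun x => f x * g x)

/-- Essential boundedness. -/
def BddAE (f : L2) : Prop := ∃ C : ℝ, ∀ᵐ x ∂μT, ‖f x‖ ≤ C

/-- The span of the negative frequencies. -/
def negSpan : Submodule ℂ L2 :=
  Submodule.span ℂ {f : L2 | ∃ n : ℤ, n < 0 ∧ f = fourierLp 2 n}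

/-- The Hardy space `H²` inside `L²(𝕋)`. -/
def H2 : Submodule ℂ L2 := negSpanᗮ

/-- The subspace `w·V` of `L²`. -/
def mulSet (w : 𝕋m → ℂ) (V : Submodule ℂ L2) : Submodule ℂ L2 :=
  Submodule.span ℂ {f : L2 | ∃ g ∈ V, f = toL2 (fun x => w x * g x)}

/-- The subspace `Θ·H²` of `L²`. -/
def SH2 (Θ : L2) : Submodule ℂ L2 := mulSet (⇑Θ) H2

/-- An inner function: a member of `H²` with unimodular boundary values. -/
def IsInner (Θ : L2) : Prop := Θ ∈ H2 ∧ ∀ᵐ x ∂μT, ‖Θ x‖ = 1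

/-- The model space `K_Θ = H² ⊖ ΘH²`, realized as an orthogonal complement. -/
def Ksp (Θ : L2) : Submodule ℂ L2 := (negSpan ⊔ SH2 Θ)ᗮ

instance KspComplete (Θ : L2) : CompleteSpace (Ksp Θ) :=
  inferInstanceAs (CompleteSpace ((negSpan ⊔ SH2 Θ)ᗮ))

instance KspHasProj (Θ : L2) : HasOrthogonalProjection (Ksp Θ) :=
  HasOrthogonalProjection.ofCompleteSpace (Ksp Θ)

/-- The orthogonal projection of `L²` onto `K_Θ`. -/
def PK (Θ : L2) : L2 →L[ℂ] Ksp Θ := orthogonalProjection (Ksp Θ)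

/-- The truncated Toeplitz operator with symbol `φ`, with values in `K_Θ`. -/
def TTOsub (Θ φ : L2) (f : L2) : Ksp Θ := PK Θ (toL2 (fun x => φ x * f x))

/-- The truncated Toeplitz operator with symbol `φ`, as an `L²`-valued map. -/
def TTO (Θ φ : L2) (f : L2) : L2 := (TTOsub Θ φ f : L2)

/-- `T` is the (necessarily bounded) extension of the truncated Toeplitz operator `A_φ^Θ`
from its dense domain `K_Θ ∩ H^∞`. -/
def ExtendsTTO (Θ φ : L2) (T : Ksp Θ →L[ℂ] Ksp Θ) : Prop :=
  ∀ f : Ksp Θ, BddAE (f : L2) → T f = TTOsub Θ φ (f : L2)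

/-- The truncated Toeplitz operator `A_φ^Θ` is bounded. -/
def IsBddTTO (Θ φ : L2) : Prop := ∃ T : Ksp Θ →L[ℂ] Ksp Θ, ExtendsTTO Θ φ T

/-- The truncated Toeplitz operator `A_φ^Θ` is zero (on its dense domain). -/
def TTOIsZero (Θ φ : L2) : Prop := ∀ f : L2, f ∈ Ksp Θ → BddAE f → TTO Θ φ f = 0

/-- `Θ(0)`, the value at the origin of the holomorphic extension. -/
def mval (f : L2) : ℂ := fourierCoeff (⇑f) 0

/-- `Θ'(0)`, the derivative at the origin of the holomorphic extension. -/
def dval (f : L2) : ℂ := fourierCoeff (⇑f) 1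

/-- The reproducing kernel `k_0^Θ` of `K_Θ` at `0`. -/
def k0 (Θ : L2) : L2 := toL2 (fun x => 1 - conj (mval Θ) * Θ x)

/-- The conjugate kernel `k̃_0^Θ = (Θ - Θ(0))/z`. -/
def kt0 (Θ : L2) : L2 := toL2 (fun x => (Θ x - mval Θ) * conj (zc 1 x))

/-- The power `B^j` (boundary values; for `j < 0` this is the conjugate power a.e.). -/
def BpowL2 (B : L2) (j : ℤ) : L2 := toL2 (fun x => B x ^ j)

/-- The composition `f ∘ B` determined by `z^j ↦ B^j`:  `f∘B = ∑ c_j(f) B^j`. -/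
def compB (B f : L2) : L2 := ∑' j : ℤ, fourierCoeff (⇑f) j • BpowL2 B j

/-- The concrete realization of the Hilbert tensor product `K_B ⊗ L²` as `ℓ²(ℤ, K_B)`,
via the Fourier basis of the second factor. -/
abbrev TensKB (B : L2) : Type := lp (fun _ : ℤ => Ksp B) 2

/-- The elementary tensor `h ⊗ f ∈ K_B ⊗ L²` in the realization `ℓ²(ℤ, K_B)`. -/
def elemTensor (B : L2) (h : Ksp B) (f : L2) : TensKB B :=
  ⟨fun j => fourierCoeff (⇑f) j • h, by
    apply memℓp_gen
    have h1 : Summable fun j : ℤ =>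
        ‖(fourierBasis (hT := ⟨by positivity⟩)).repr f j‖ ^ (2 : ℝ≥0∞).toReal :=
      (memℓp_gen_iff (by norm_num)).1 (lp.memℓp ((fourierBasis (hT := ⟨by positivity⟩)).repr f))
    have h2 := h1.mul_right (‖h‖ ^ (2 : ℝ≥0∞).toReal)
    apply Summable.congr h2
    intro j
    rw [fourierBasis_repr]
    rw [norm_smul, ← Real.mul_rpow (norm_nonneg _) (norm_nonneg _)]⟩

/-- The closed subspace `K_B ⊗ M` of `K_B ⊗ L² = ℓ²(ℤ, K_B)`. -/
def tensSp (B : L2) (M : Submodule ℂ L2) : Submodule ℂ (TensKB B) :=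
  (Submodule.span ℂ {x : TensKB B | ∃ h : Ksp B, ∃ f ∈ M, x = elemTensor B h f}).topologicalClosure

/-- The set of complex conjugates of the members of `V`. -/
def conjSM (V : Submodule ℂ L2) : Submodule ℂ L2 :=
  Submodule.span ℂ {f : L2 | ∃ g ∈ V, f = toL2 (fun x => conj (g x))}

/-- The kernel of the truncated Toeplitz operator `A_φ^Θ`, inside `K_Θ`. -/
def kerTTO (Θ φ : L2) : Submodule ℂ L2 :=
  Submodule.span ℂ {f : L2 | f ∈ Ksp Θ ∧ TTO Θ φ f = 0}

/-! For `f ∈ K_Θ`, the functions `z f - ⟪z̄ Θ, f⟫ Θ` and `z̄ f - f̂(0) z̄` again lie in `K_Θ`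
(they are the compressed shift and its adjoint applied to `f`), and they are essentially bounded
when `f` is. Hence `A_{z^{±1} φ} f = A_φ (S f) + ℓ(f) P_Θ(φ u)` with `S` bounded, `ℓ` a bounded
functional and `u ∈ {Θ, z̄}`, so `A_{z^{±1} φ}` is bounded whenever `A_φ` is; induction on `j`
finishes. -/

open scoped InnerProductSpace

section ToL2

lemma toL2_coeFn {g : 𝕋m → ℂ} (h : MemLp g 2 μT) : ⇑(toL2 g) =ᵐ[μT] g := by
  rw [toL2, dif_pos h]
  exact h.coeFn_toLp

lemma toL2_congr {g g' : 𝕋m → ℂ} (h : g =ᵐ[μT] g') : toL2 g = toL2 g' := by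
  unfold toL2
  by_cases hg : MemLp g 2 μT
  · rw [dif_pos hg, dif_pos (hg.ae_eq h), hg.toLp_congr (hg.ae_eq h) h]
  · rw [dif_neg hg, dif_neg fun hg' => hg (hg'.ae_eq h.symm)]

lemma toL2_coe (f : L2) : toL2 ⇑f = f := by
  rw [toL2, dif_pos (Lp.memLp f)]
  exact Lp.toLp_coeFn f (Lp.memLp f)

lemma toL2_add {g g' : 𝕋m → ℂ} (hg : MemLp g 2 μT) (hg' : MemLp g' 2 μT) :
    toL2 (fun x => g x + g' x) = toL2 g + toL2 g' := by
  change toL2 (g + g') = _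
  rw [toL2, toL2, toL2, dif_pos hg, dif_pos hg', dif_pos (hg.add hg')]
  exact MemLp.toLp_add hg hg'

lemma toL2_const_mul {g : 𝕋m → ℂ} (c : ℂ) (hg : MemLp g 2 μT) :
    toL2 (fun x => c * g x) = c • toL2 g := by
  change toL2 (c • g) = _
  rw [toL2, toL2, dif_pos hg, dif_pos (hg.const_smul c)]
  exact MemLp.toLp_const_smul c hg

end ToL2

section BoundedMultipliers

lemma memLp_mul_of_ae_norm_le {w g : 𝕋m → ℂ} {C : ℝ} (hw : AEStronglyMeasurable w μT)
    (hb : ∀ᵐ x ∂μT, ‖w x‖ ≤ C) (hg : MemLp g 2 μT) : MemLp (fun x => w x * g x) 2 μT := by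
  refine hg.of_le_mul (c := C) (hw.mul hg.aestronglyMeasurable) ?_
  filter_upwards [hb] with x hx
  rw [norm_mul]
  exact mul_le_mul_of_nonneg_right hx (norm_nonneg _)

lemma BddAE.memLp_mul_left {f : L2} (hf : BddAE f) (g : L2) :
    MemLp (fun x => f x * g x) 2 μT :=
  let ⟨_, hC⟩ := hf
  memLp_mul_of_ae_norm_le (Lp.aestronglyMeasurable f) hC (Lp.memLp g)

lemma BddAE.memLp_mul_right {f : L2} (hf : BddAE f) (g : L2) :
    MemLp (fun x => g x * f x) 2 μT := by
  simpa only [mul_comm] using hf.memLp_mul_left g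

lemma BddAE.sub {f g : L2} (hf : BddAE f) (hg : BddAE g) : BddAE (f - g) := by
  obtain ⟨C, hC⟩ := hf
  obtain ⟨D, hD⟩ := hg
  refine ⟨C + D, ?_⟩
  filter_upwards [Lp.coeFn_sub f g, hC, hD] with x hx hCx hDx
  rw [hx, Pi.sub_apply]
  exact (norm_sub_le _ _).trans (add_le_add hCx hDx)

lemma BddAE.const_smul {f : L2} (hf : BddAE f) (c : ℂ) : BddAE (c • f) := by
  obtain ⟨C, hC⟩ := hf
  refine ⟨‖c‖ * C, ?_⟩
  filter_upwards [Lp.coeFn_smul c f, hC] with x hx hCx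
  rw [hx, Pi.smul_apply, norm_smul]
  exact mul_le_mul_of_nonneg_left hCx (norm_nonneg c)

lemma IsInner.bddAE {Θ : L2} (hΘ : IsInner Θ) : BddAE Θ :=
  ⟨1, hΘ.2.mono fun _ hx => hx.le⟩

end BoundedMultipliers

section Fourier

lemma norm_zc (j : ℤ) (x : 𝕋m) : ‖zc j x‖ = 1 :=
  Circle.norm_coe _

lemma zc_mul_zc (j k : ℤ) (x : 𝕋m) : zc j x * zc k x = zc (j + k) x := by
  simp [zc]

lemma conj_zc (j : ℤ) (x : 𝕋m) : conj (zc j x) = zc (-j) x := by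
  simp [zc]

lemma memLp_zc_mul (j : ℤ) (f : L2) : MemLp (fun x => zc j x * f x) 2 μT :=
  memLp_mul_of_ae_norm_le (fourier j).continuous.aestronglyMeasurable
    (ae_of_all μT fun x => (norm_zc j x).le) (Lp.memLp f)

lemma memLp_conj {g : 𝕋m → ℂ} (hg : MemLp g 2 μT) : MemLp (fun x => conj (g x)) 2 μT :=
  hg.of_le_mul (c := 1)
    (Complex.continuous_conj.comp_aestronglyMeasurable hg.aestronglyMeasurable)
    (ae_of_all μT fun x => by simp)

lemma fourierCoeff_zc_mul (k n : ℤ) (g : 𝕋m → ℂ) :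
    fourierCoeff (fun x => zc k x * g x) n = fourierCoeff g (n - k) := by
  refine integral_congr_ae (ae_of_all μT fun x => ?_)
  simp only [smul_eq_mul, zc]
  rw [← mul_assoc, ← fourier_add, show -n + k = -(n - k) by ring]

lemma fourierCoeff_conj (g : 𝕋m → ℂ) (n : ℤ) :
    fourierCoeff (fun x => conj (g x)) n = conj (fourierCoeff g (-n)) := by
  rw [fourierCoeff, fourierCoeff, ← integral_conj]
  refine integral_congr_ae (ae_of_all μT fun x => ?_)
  simp only [smul_eq_mul, map_mul, neg_neg, ← fourier_neg]

lemma inner_eq_integral (f g : L2) : ⟪f, g⟫_ℂ = ∫ x, conj (f x) * g x ∂μT := by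
  rw [MeasureTheory.L2.inner_def]
  exact integral_congr_ae (ae_of_all _ fun x => by simp [RCLike.inner_apply, mul_comm])

lemma inner_fourierLp (n : ℤ) (f : L2) :
    ⟪(fourierLp 2 n : L2), f⟫_ℂ = fourierCoeff (⇑f) n := by
  rw [← fourierBasis_repr, HilbertBasis.repr_apply_apply, coe_fourierBasis]

lemma inner_fourierLp_fourierLp (n m : ℤ) :
    ⟪(fourierLp 2 n : L2), (fourierLp 2 m : L2)⟫_ℂ = if n = m then 1 else 0 :=
  orthonormal_iff_ite.1 orthonormal_fourier n m

lemma inner_eq_zero_of_fourierCoeff (f g : L2)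
    (h : ∀ n : ℤ, fourierCoeff (⇑f) n = 0 ∨ fourierCoeff (⇑g) n = 0) : ⟪f, g⟫_ℂ = 0 := by
  rw [← HilbertBasis.tsum_inner_mul_inner (fourierBasis (T := 2 * Real.pi)) f g]
  refine (tsum_congr fun n => ?_).trans tsum_zero
  rw [coe_fourierBasis, ← inner_conj_symm, inner_fourierLp, inner_fourierLp]
  rcases h n with h | h <;> simp [h]

end Fourier

section HardySpace

lemma mem_orthogonal_span_of {S : Set L2} {v : L2} (h : ∀ u ∈ S, ⟪u, v⟫_ℂ = 0) :
    v ∈ (span ℂ S)ᗮ :=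
  (isOrtho_span.2 fun u hu w hw => by rw [Set.mem_singleton_iff.1 hw]; exact h u hu).symm
    (mem_span_singleton_self v)

lemma fourierCoeff_eq_zero_of_mem_H2 {f : L2} (hf : f ∈ H2) {n : ℤ} (hn : n < 0) :
    fourierCoeff (⇑f) n = 0 := by
  rw [← inner_fourierLp]
  exact hf _ (subset_span ⟨n, hn, rfl⟩)

lemma mem_H2_of_fourierCoeff {f : L2} (h : ∀ n : ℤ, n < 0 → fourierCoeff (⇑f) n = 0) :
    f ∈ H2 :=
  mem_orthogonal_span_of fun _ ⟨n, hn, hu⟩ => hu ▸ (inner_fourierLp n f).trans (h n hn)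

lemma fourierLp_mem_H2 {m : ℤ} (hm : 0 ≤ m) : (fourierLp 2 m : L2) ∈ H2 :=
  mem_H2_of_fourierCoeff fun n hn => by
    rw [← inner_fourierLp, inner_fourierLp_fourierLp, if_neg (by omega)]

lemma fourierCoeff_eq_zero_of_mem_Ksp {Θ f : L2} (hf : f ∈ Ksp Θ) {n : ℤ} (hn : n < 0) :
    fourierCoeff (⇑f) n = 0 := by
  rw [← inner_fourierLp]
  exact hf _ (mem_sup_left (subset_span ⟨n, hn, rfl⟩))

lemma inner_mul_eq_zero_of_mem_Ksp {Θ f : L2} (hf : f ∈ Ksp Θ) {g : L2} (hg : g ∈ H2) :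
    ⟪toL2 (fun x => Θ x * g x), f⟫_ℂ = 0 :=
  hf _ (mem_sup_right (subset_span ⟨g, hg, rfl⟩))

lemma mem_Ksp_of {Θ v : L2} (h1 : ∀ n : ℤ, n < 0 → ⟪(fourierLp 2 n : L2), v⟫_ℂ = 0)
    (h2 : ∀ g ∈ H2, ⟪toL2 (fun x => Θ x * g x), v⟫_ℂ = 0) : v ∈ Ksp Θ := by
  rw [Ksp, ← inf_orthogonal]
  exact ⟨mem_orthogonal_span_of fun _ ⟨n, hn, hu⟩ => hu ▸ h1 n hn,
    mem_orthogonal_span_of fun _ ⟨g, hg, hu⟩ => hu ▸ h2 g hg⟩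

end HardySpace

section MulFourier

def mulFourier (j : ℤ) : L2 →L[ℂ] L2 :=
  LinearMap.mkContinuous
    { toFun := fun f => toL2 (fun x => zc j x * f x)
      map_add' := fun f g => by
        rw [← toL2_add (memLp_zc_mul j f) (memLp_zc_mul j g)]
        refine toL2_congr ?_
        filter_upwards [Lp.coeFn_add f g] with x hx
        rw [hx, Pi.add_apply, mul_add]
      map_smul' := fun c f => by
        rw [RingHom.id_apply, ← toL2_const_mul c (memLp_zc_mul j f)]
        refine toL2_congr ?_
        filter_upwards [Lp.coeFn_smul c f] with x hx
        rw [hx, Pi.smul_apply, smul_eq_mul, mul_left_comm] }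
    1 fun f => by
      rw [one_mul, LinearMap.coe_mk, AddHom.coe_mk, toL2, dif_pos (memLp_zc_mul j f),
        Lp.norm_toLp, Lp.norm_def]
      refine ENNReal.toReal_mono (Lp.eLpNorm_ne_top f) (eLpNorm_mono_ae ?_)
      exact ae_of_all μT fun x => by rw [norm_mul, norm_zc, one_mul]

lemma mulFourier_apply (j : ℤ) (f : L2) : mulFourier j f = toL2 (fun x => zc j x * f x) :=
  rfl

lemma coeFn_mulFourier (j : ℤ) (f : L2) : ⇑(mulFourier j f) =ᵐ[μT] fun x => zc j x * f x :=
  toL2_coeFn (memLp_zc_mul j f)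

lemma fourierCoeff_mulFourier (j : ℤ) (f : L2) (n : ℤ) :
    fourierCoeff (⇑(mulFourier j f)) n = fourierCoeff (⇑f) (n - j) := by
  rw [fourierCoeff_congr_ae (coeFn_mulFourier j f), fourierCoeff_zc_mul]

lemma inner_mulFourier (j : ℤ) (f g : L2) :
    ⟪mulFourier j f, g⟫_ℂ = fourierCoeff (fun x => conj (f x) * g x) j := by
  rw [inner_eq_integral]
  refine integral_congr_ae ?_
  filter_upwards [coeFn_mulFourier j f] with x hx
  rw [hx, map_mul, conj_zc, smul_eq_mul, zc, mul_assoc]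

lemma mulFourier_mem_H2 {j : ℤ} (hj : 0 ≤ j) {f : L2} (hf : f ∈ H2) : mulFourier j f ∈ H2 :=
  mem_H2_of_fourierCoeff fun n hn => by
    rw [fourierCoeff_mulFourier]
    exact fourierCoeff_eq_zero_of_mem_H2 hf (by omega)

lemma mulFourier_zero (f : L2) : mulFourier 0 f = f := by
  conv_rhs => rw [← toL2_coe f]
  exact toL2_congr (ae_of_all μT fun x => by simp [zc])

lemma mulFourier_mulFourier (i j : ℤ) (f : L2) :
    mulFourier i (mulFourier j f) = mulFourier (i + j) f := by
  refine toL2_congr ?_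
  filter_upwards [coeFn_mulFourier j f] with x hx
  rw [hx, ← mul_assoc, zc_mul_zc]

lemma BddAE.mulFourier {f : L2} (hf : BddAE f) (j : ℤ) : BddAE (mulFourier j f) := by
  obtain ⟨C, hC⟩ := hf
  refine ⟨C, ?_⟩
  filter_upwards [coeFn_mulFourier j f, hC] with x hx hCx
  rwa [hx, norm_mul, norm_zc, one_mul]

lemma bddAE_fourierLp (n : ℤ) : BddAE (fourierLp 2 n) :=
  ⟨1, (coeFn_fourierLp 2 n).mono fun x hx => by rw [hx]; exact (Circle.norm_coe _).le⟩

end MulFourier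

section ModelSpaceShifts

lemma fourierCoeff_mul_eq_zero_of_mem_H2 {g h : L2} (hg : g ∈ H2) (hh : h ∈ H2) {n : ℤ}
    (hn : n < 0) : fourierCoeff (fun x => g x * h x) n = 0 := by
  have hc := memLp_conj (Lp.memLp g)
  have key : fourierCoeff (fun x => g x * h x) n
      = ⟪toL2 (fun x => conj (g x)), mulFourier (-n) h⟫_ℂ := by
    rw [inner_eq_integral]
    refine integral_congr_ae ?_
    filter_upwards [toL2_coeFn hc, coeFn_mulFourier (-n) h] with x h1 h2
    rw [h1, h2, conj_conj, smul_eq_mul, zc]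
    ring
  rw [key]
  refine inner_eq_zero_of_fourierCoeff _ _ fun m => ?_
  rcases le_or_gt m 0 with hm | hm
  · right
    rw [fourierCoeff_mulFourier]
    exact fourierCoeff_eq_zero_of_mem_H2 hh (by omega)
  · left
    rw [fourierCoeff_congr_ae (toL2_coeFn hc), fourierCoeff_conj,
      fourierCoeff_eq_zero_of_mem_H2 hg (by omega), map_zero]

theorem mulFourier_neg_one_sub_mem_Ksp {Θ f : L2} (hΘ : IsInner Θ) (hf : f ∈ Ksp Θ) :
    mulFourier (-1) f - ⟪(fourierLp 2 0 : L2), f⟫_ℂ • (fourierLp 2 (-1) : L2) ∈ Ksp Θ := by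
  refine mem_Ksp_of (fun n hn => ?_) (fun g hg => ?_)
  · rw [inner_sub_right, inner_smul_right, inner_fourierLp, inner_fourierLp,
      fourierCoeff_mulFourier, inner_fourierLp_fourierLp]
    rcases eq_or_ne n (-1) with rfl | hn1
    · norm_num
    · rw [if_neg hn1, mul_zero, fourierCoeff_eq_zero_of_mem_Ksp hf (by omega), sub_zero]
  · have hΘg := hΘ.bddAE.memLp_mul_left g
    have hΘzg := hΘ.bddAE.memLp_mul_left (mulFourier 1 g)
    have shift : ⟪toL2 (fun x => Θ x * g x), mulFourier (-1) f⟫_ℂ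
        = ⟪toL2 (fun x => Θ x * mulFourier 1 g x), f⟫_ℂ := by
      rw [inner_eq_integral, inner_eq_integral]
      refine integral_congr_ae ?_
      filter_upwards [toL2_coeFn hΘg, toL2_coeFn hΘzg, coeFn_mulFourier (-1) f,
        coeFn_mulFourier 1 g] with x h1 h2 h3 h4
      rw [h1, h2, h3, h4, map_mul, map_mul, map_mul, conj_zc]
      ring
    have orth_conj_z : ⟪toL2 (fun x => Θ x * g x), (fourierLp 2 (-1) : L2)⟫_ℂ = 0 := by
      rw [← inner_conj_symm, inner_fourierLp, fourierCoeff_congr_ae (toL2_coeFn hΘg),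
        fourierCoeff_mul_eq_zero_of_mem_H2 hΘ.1 hg (by norm_num), map_zero]
    rw [inner_sub_right, inner_smul_right, shift, orth_conj_z,
      inner_mul_eq_zero_of_mem_Ksp hf (mulFourier_mem_H2 zero_le_one hg), mul_zero, sub_zero]

lemma fourierCoeff_conj_mul_eq_zero_of_mem_Ksp {Θ f : L2} (hf : f ∈ Ksp Θ) {m : ℤ}
    (hm : 0 ≤ m) : fourierCoeff (fun x => conj (Θ x) * f x) m = 0 := by
  rw [← inner_mulFourier m Θ f]
  convert inner_mul_eq_zero_of_mem_Ksp hf (fourierLp_mem_H2 hm) using 2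
  refine toL2_congr ?_
  filter_upwards [coeFn_fourierLp 2 m] with x hx
  rw [hx, mul_comm, zc]

lemma fourierCoeff_conj_mul_mulFourier_one {Θ f : L2} (hf : f ∈ Ksp Θ) {n : ℤ} (hn : 0 ≤ n) :
    fourierCoeff (fun x => conj (Θ x) * mulFourier 1 f x) n
      = if n = 0 then ⟪mulFourier (-1) Θ, f⟫_ℂ else 0 := by
  have hshift : fourierCoeff (fun x => conj (Θ x) * mulFourier 1 f x) n
      = fourierCoeff (fun x => conj (Θ x) * f x) (n - 1) := by
    rw [← fourierCoeff_zc_mul 1 n]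
    refine congrFun (fourierCoeff_congr_ae ?_) n
    filter_upwards [coeFn_mulFourier 1 f] with x hx
    rw [hx, mul_left_comm]
  rw [hshift]
  split_ifs with h0
  · rw [h0, inner_mulFourier, zero_sub]
  · exact fourierCoeff_conj_mul_eq_zero_of_mem_Ksp hf (by omega)

theorem mulFourier_one_sub_mem_Ksp {Θ f : L2} (hΘ : IsInner Θ) (hf : f ∈ Ksp Θ) :
    mulFourier 1 f - ⟪mulFourier (-1) Θ, f⟫_ℂ • Θ ∈ Ksp Θ := by
  set d := ⟪mulFourier (-1) Θ, f⟫_ℂ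
  refine mem_Ksp_of (fun n hn => ?_) (fun g hg => ?_)
  · rw [inner_sub_right, inner_smul_right, inner_fourierLp, inner_fourierLp,
      fourierCoeff_mulFourier, fourierCoeff_eq_zero_of_mem_Ksp hf (by omega),
      fourierCoeff_eq_zero_of_mem_H2 hΘ.1 hn, mul_zero, sub_zero]
  · have hΘg := hΘ.bddAE.memLp_mul_left g
    have hv : MemLp (fun x => conj (Θ x) * mulFourier 1 f x) 2 μT :=
      memLp_mul_of_ae_norm_le (C := 1) (continuous_conj.comp_aestronglyMeasurable
        (Lp.aestronglyMeasurable Θ)) (hΘ.2.mono fun x hx => by simp [hx]) (Lp.memLp _)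
    set v := toL2 (fun x => conj (Θ x) * mulFourier 1 f x)
    have adjoint_f : ⟪toL2 (fun x => Θ x * g x), mulFourier 1 f⟫_ℂ = ⟪g, v⟫_ℂ := by
      rw [inner_eq_integral, inner_eq_integral]
      refine integral_congr_ae ?_
      filter_upwards [toL2_coeFn hΘg, toL2_coeFn hv] with x h1 h2
      rw [h1, h2, map_mul]
      ring
    have adjoint_Θ : ⟪toL2 (fun x => Θ x * g x), Θ⟫_ℂ = ⟪g, (fourierLp 2 0 : L2)⟫_ℂ := by
      rw [inner_eq_integral, inner_eq_integral]
      refine integral_congr_ae ?_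
      filter_upwards [toL2_coeFn hΘg, coeFn_fourierLp 2 0, hΘ.2] with x h1 h2 h3
      rw [h1, h2, fourier_zero, map_mul, mul_right_comm, ← Complex.normSq_eq_conj_mul_self,
        Complex.normSq_eq_norm_sq, h3]
      simp
    have orth : ⟪g, v - d • (fourierLp 2 0 : L2)⟫_ℂ = 0 := by
      refine inner_eq_zero_of_fourierCoeff _ _ fun n => ?_
      rcases lt_or_ge n 0 with hn | hn
      · exact .inl (fourierCoeff_eq_zero_of_mem_H2 hg hn)
      · right
        rw [← inner_fourierLp, inner_sub_right, inner_smul_right, inner_fourierLp,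
          fourierCoeff_congr_ae (toL2_coeFn hv), fourierCoeff_conj_mul_mulFourier_one hf hn,
          inner_fourierLp_fourierLp]
        split_ifs <;> simp [d]
    rw [inner_sub_right, inner_smul_right, adjoint_f, adjoint_Θ, ← inner_smul_right,
      ← inner_sub_right, orth]

end ModelSpaceShifts

section TruncatedToeplitz

theorem IsBddTTO.mulFourier_of_forall_sub_mem_Ksp {Θ φ : L2} (hb : IsBddTTO Θ φ) (j : ℤ)
    {u : L2} (hu : BddAE u) (ℓ : L2 →L[ℂ] ℂ)
    (hK : ∀ f ∈ Ksp Θ, mulFourier j f - ℓ f • u ∈ Ksp Θ) : IsBddTTO Θ (mulFourier j φ) := by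
  obtain ⟨T, hT⟩ := hb
  let S : Ksp Θ →L[ℂ] Ksp Θ :=
    ((mulFourier j - ℓ.smulRight u).comp (Ksp Θ).subtypeL).codRestrict (Ksp Θ) fun f => hK f f.2
  have hS (f : Ksp Θ) : (S f : L2) = mulFourier j f - ℓ f • u := rfl
  refine ⟨T.comp S + (ℓ.comp (Ksp Θ).subtypeL).smulRight (PK Θ (toL2 fun x => φ x * u x)),
    fun f hf => ?_⟩
  have hSf : BddAE (S f : L2) := hS f ▸ (hf.mulFourier j).sub (hu.const_smul _)
  have hφu := hu.memLp_mul_right φ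
  have split : toL2 (fun x => mulFourier j φ x * (f : L2) x)
      = toL2 (fun x => φ x * (S f : L2) x) + ℓ f • toL2 (fun x => φ x * u x) := by
    rw [← toL2_const_mul _ hφu, ← toL2_add (hSf.memLp_mul_right φ) (hφu.const_mul _)]
    refine toL2_congr ?_
    filter_upwards [coeFn_mulFourier j φ, coeFn_mulFourier j (f : L2),
      Lp.coeFn_sub (mulFourier j (f : L2)) (ℓ f • u), Lp.coeFn_smul (ℓ f) u] with x h1 h2 h3 h4
    rw [hS, h3, Pi.sub_apply, h4, Pi.smul_apply, h1, h2, smul_eq_mul]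
    ring
  rw [add_apply, ContinuousLinearMap.comp_apply, hT _ hSf,
    ContinuousLinearMap.smulRight_apply, TTOsub, TTOsub, split, map_add, map_smul]
  rfl

theorem IsBddTTO.mulFourier_one {Θ φ : L2} (hΘ : IsInner Θ) (hb : IsBddTTO Θ φ) :
    IsBddTTO Θ (mulFourier 1 φ) :=
  hb.mulFourier_of_forall_sub_mem_Ksp 1 hΘ.bddAE (innerSL ℂ (mulFourier (-1) Θ))
    fun _ hf => mulFourier_one_sub_mem_Ksp hΘ hf

theorem IsBddTTO.mulFourier_neg_one {Θ φ : L2} (hΘ : IsInner Θ) (hb : IsBddTTO Θ φ) :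
    IsBddTTO Θ (mulFourier (-1) φ) :=
  hb.mulFourier_of_forall_sub_mem_Ksp (-1) (bddAE_fourierLp (-1)) (innerSL ℂ (fourierLp 2 0))
    fun _ hf => mulFourier_neg_one_sub_mem_Ksp hΘ hf

theorem IsBddTTO.mulFourier {Θ φ : L2} (hΘ : IsInner Θ) (hb : IsBddTTO Θ φ) (j : ℤ) :
    IsBddTTO Θ (mulFourier j φ) := by
  induction j using Int.induction_on with
  | zero => rwa [mulFourier_zero]
  | succ k ih => rw [add_comm, ← mulFourier_mulFourier]; exact ih.mulFourier_one hΘ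
  | pred k ih => rw [sub_eq_neg_add, ← mulFourier_mulFourier]; exact ih.mulFourier_neg_one hΘ

end TruncatedToeplitz

/-- If `Θ` is inner, `φ ∈ L²` and `A_φ^Θ` is bounded, then `A_{z^j φ}^Θ` is
bounded for every integer `j`. -/
theorem stmt10 (Θ : L2) (hΘ : IsInner Θ) (φ : L2) (hb : IsBddTTO Θ φ) (j : ℤ) :
    IsBddTTO Θ (toL2 (fun x => zc j x * φ x)) := by
  rw [← mulFourier_apply]
  exact hb.mulFourier hΘ j
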